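/- arXiv:1808.02076 — 4 statements merged into one kernel-verified Lean document; each statement's English description precedes it below -/
import Mathlib

section
/- For every integer k > 0 and every rational number q with 0 ≤ q ≤ 2k-1, there exists a weighted k-majority tournament T and a dominating set D of T such that W(T,D) = q. -/
open scoped Classical
open Finset

noncomputable section

/-- The weight of the pair (u,v): number of the 2k-1 linear orders in which u > v. -/
def weightFn {V : Type} [Fintype V] (k : ℕ) (π : Fin (2*k-1) → LinearOrder V) (u v : V) : ℕ :=
  (Finset.univ.filter (fun i => (π i).lt v u)).card

/-- u → v is an edge of the k-majority tournament iff u > v in at least k of the orders. -/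
def isEdge {V : Type} [Fintype V] (k : ℕ) (π : Fin (2*k-1) → LinearOrder V) (u v : V) : Prop :=
  k ≤ weightFn k π u v

/-- D is a dominating set: every vertex not in D is dominated by some vertex of D. -/
def IsDomSet {V : Type} [Fintype V] (k : ℕ) (π : Fin (2*k-1) → LinearOrder V) (D : Finset V) : Prop :=
  ∀ v, v ∉ D → ∃ u ∈ D, isEdge k π u v

/-- Average inweight of v with respect to D. -/
def avgInweight {V : Type} [Fintype V] (k : ℕ) (π : Fin (2*k-1) → LinearOrder V)
    (D : Finset V) (v : V) : ℚ :=
  (∑ u ∈ D.filter (fun u => isEdge k π u v), (weightFn k π u v : ℚ)) / D.card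

/-- The weight (approval gap) W(T,D) of a set D. -/
def Wgap {V : Type} [Fintype V] (k : ℕ) (π : Fin (2*k-1) → LinearOrder V) (D : Finset V) : ℚ :=
  if h : D = Finset.univ then 0
  else (Finset.univ \ D).inf'
    (Finset.sdiff_nonempty.mpr (fun hs => h (Finset.univ_subset_iff.mp hs)))
    (fun v => avgInweight k π D v)

/-- The maximum approval gap γ_w(T). -/
def gammaW {V : Type} [Fintype V] (k : ℕ) (π : Fin (2*k-1) → LinearOrder V) : ℚ :=
  (Finset.univ.filter (fun D : Finset V => IsDomSet k π D)).sup'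
    ⟨Finset.univ, Finset.mem_filter.mpr
      ⟨Finset.mem_univ _, fun v hv => absurd (Finset.mem_univ v) hv⟩⟩
    (fun D => Wgap k π D)

/-- Edge relation of the clockwise tournament CW(n); vertex v_{i+1} is index i (0-based). -/
def cwEdge (n : ℕ) (i j : Fin n) : Prop :=
  ∃ m : ℕ, 1 ≤ m ∧
    (if n % 2 = 1 then m ≤ (n-1)/2
     else if i.val < n/2 then m ≤ n/2 else m ≤ n/2 - 1) ∧
    j.val = (i.val + m) % n

end

/-!
Add to the candidate set `ι` one extra candidate `⊤`, and let the `t`-th order put `⊤` below `i`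
exactly when `t < w i`. Then `i` beats `⊤` with weight `w i` whenever `w i ≥ k`, so for
`D = ι` the weight `W(T, D)` is the sum of those `w i` divided by `|ι|`. Writing `q = a / b`, it
remains to split `a k` into `b k` parts, each `0` or in `[k, 2k - 1]`, which a greedy choice
does. For `q = 0` take `D = V`.
-/

theorem Wgap_univ_erase {V : Type} [Fintype V] [DecidableEq V] (k : ℕ)
    (π : Fin (2*k-1) → LinearOrder V) (v : V) :
    Wgap k π (univ.erase v) = avgInweight k π (univ.erase v) v := by
  have hne : univ.erase v ≠ univ := fun h => by simpa using h.ge (mem_univ v)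
  rw [Wgap, dif_neg hne]
  refine le_antisymm (inf'_le _ (by simp)) (le_inf' _ _ fun u hu => ?_)
  obtain rfl : u = v := by simpa using hu
  rfl

theorem Finset.univ_erase_top {ι : Type*} [Fintype ι] [DecidableEq ι] :
    (univ : Finset (WithTop ι)).erase ⊤ = univ.map Function.Embedding.coeWithTop := by
  ext x
  cases x <;> simp

theorem exists_fin_sum_eq_of_le {lo hi : ℕ} (hlohi : 2 * lo ≤ hi + 1) :
    ∀ {d S : ℕ}, S ≤ d * hi → S = 0 ∨ lo ≤ S →
      ∃ w : Fin d → ℕ, (∀ i, w i ≤ hi) ∧ (∀ i, w i = 0 ∨ lo ≤ w i) ∧ ∑ i, w i = S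
  | 0, S, hS, _ => ⟨Fin.elim0, nofun, nofun, by simp_all⟩
  | d + 1, S, hS, hSlo => by
    rw [add_mul, one_mul] at hS
    -- The first part takes as much as it can while leaving either `0` or at least `lo`;
    -- `2 * lo ≤ hi + 1` keeps it at least `lo` when `S > hi`.
    obtain ⟨a, ha_le, ha_lo, hSa, hSa_lo, haS⟩ :
        ∃ a, a ≤ hi ∧ (a = 0 ∨ lo ≤ a) ∧ S - a ≤ d * hi ∧ (S - a = 0 ∨ lo ≤ S - a) ∧ a ≤ S := by
      rcases le_or_gt S hi with hS_hi | hS_hi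
      · exact ⟨S, hS_hi, hSlo, by omega, by omega⟩
      · have hd : hi ≤ d * hi := by
          rcases d with _ | d
          · omega
          · exact Nat.le_mul_of_pos_left hi d.succ_pos
        exact ⟨min hi (S - lo), by omega, by omega, by omega, by omega, by omega⟩
    obtain ⟨w, hw_le, hw_lo, hw_sum⟩ := exists_fin_sum_eq_of_le hlohi hSa hSa_lo
    refine ⟨Fin.cons a w, Fin.forall_fin_succ.2 ⟨ha_le, hw_le⟩,
      Fin.forall_fin_succ.2 ⟨ha_lo, hw_lo⟩, ?_⟩
    rw [Fin.sum_cons, hw_sum]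
    omega

theorem Rat.exists_nat_div_eq_of_nonneg {q : ℚ} (hq : 0 ≤ q) : ∃ a b : ℕ, 0 < b ∧ q = a / b :=
  ⟨q.num.toNat, q.den, q.den_pos, by
    rw [← Int.cast_natCast, Int.toNat_of_nonneg (Rat.num_nonneg.mpr hq), Rat.num_div_den]⟩

section InweightOrders

variable {ι : Type}

def inweightKey (w : ι → ℕ) (t : ℕ) : WithTop ι → Bool ×ₗ WithTop ι
  | ⊤ => toLex (false, ⊤)
  | (i : ι) => toLex (decide (t < w i), i)

theorem inweightKey_injective (w : ι → ℕ) (t : ℕ) : Function.Injective (inweightKey w t) := by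
  intro x y h
  cases x <;> cases y <;> simp_all [inweightKey]

variable [LinearOrder ι]

abbrev inweightOrders (k : ℕ) (w : ι → ℕ) : Fin (2*k-1) → LinearOrder (WithTop ι) :=
  fun t => LinearOrder.lift' (inweightKey w t) (inweightKey_injective w t)

theorem inweightOrders_lt_top_iff (k : ℕ) (w : ι → ℕ) (t : Fin (2*k-1)) (i : ι) :
    (inweightOrders k w t).lt ⊤ i ↔ t.val < w i := by
  change inweightKey w t ⊤ < inweightKey w t i ↔ _
  by_cases h : t.val < w i <;> simp [inweightKey, Prod.Lex.toLex_lt_toLex, h]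

variable [Fintype ι] {k : ℕ} {w : ι → ℕ}

theorem weightFn_inweightOrders (hw : ∀ i, w i ≤ 2*k-1) (i : ι) :
    weightFn k (inweightOrders k w) i ⊤ = w i := by
  simp only [weightFn, inweightOrders_lt_top_iff, Fin.card_filter_val_lt, min_eq_right (hw i)]

theorem isDomSet_inweightOrders (hw : ∀ i, w i ≤ 2*k-1) {i : ι} (hi : k ≤ w i) :
    IsDomSet k (inweightOrders k w) (univ.erase ⊤) := by
  intro v hv
  obtain rfl : v = ⊤ := by simpa using hv
  exact ⟨i, by simp, by rwa [isEdge, weightFn_inweightOrders hw]⟩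

theorem Wgap_inweightOrders (hw : ∀ i, w i ≤ 2*k-1) :
    Wgap k (inweightOrders k w) (univ.erase ⊤) =
      (∑ i with k ≤ w i, (w i : ℚ)) / Fintype.card ι := by
  rw [Wgap_univ_erase, avgInweight, univ_erase_top, sum_filter, sum_filter, sum_map, card_map,
    card_univ]
  simp [isEdge, weightFn_inweightOrders hw]

end InweightOrders

theorem stmt2 (k : ℕ) (hk : 0 < k) (q : ℚ) (hq0 : 0 ≤ q) (hq1 : q ≤ 2*(k:ℚ)-1) :
    ∃ (V : Type) (inst : Fintype V) (π : Fin (2*k-1) → LinearOrder V) (D : Finset V),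
      @IsDomSet V inst k π D ∧ @Wgap V inst k π D = q := by
  rcases hq0.eq_or_lt with rfl | hq
  · exact ⟨Unit, inferInstance, fun _ => inferInstance, univ,
      fun v hv => absurd (mem_univ v) hv, dif_pos rfl⟩
  obtain ⟨a, b, hb, rfl⟩ := Rat.exists_nat_div_eq_of_nonneg hq0
  have ha : 0 < a := by exact_mod_cast (div_pos_iff_of_pos_right (by positivity)).mp hq
  have hab : a ≤ b * (2 * k - 1) := by
    rw [div_le_iff₀ (by positivity)] at hq1
    qify [show 1 ≤ 2 * k by omega]
    linarith
  obtain ⟨w, hw_le, hw_lo, hw_sum⟩ := exists_fin_sum_eq_of_le (lo := k) (hi := 2 * k - 1)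
    (by omega) (d := b * k) (S := a * k)
    (by rw [mul_right_comm]; exact Nat.mul_le_mul_right k hab)
    (Or.inr (Nat.le_mul_of_pos_left k ha))
  obtain ⟨i, hi⟩ : ∃ i, k ≤ w i := by
    by_contra! h
    have : ∑ i, w i = 0 := sum_eq_zero fun i _ => (hw_lo i).resolve_right (h i).not_ge
    have := Nat.mul_pos ha hk
    omega
  refine ⟨WithTop (Fin (b * k)), inferInstance, inweightOrders k w, univ.erase ⊤,
    isDomSet_inweightOrders hw_le hi, ?_⟩
  rw [Wgap_inweightOrders hw_le,
    sum_filter_of_ne fun i _ h => (hw_lo i).resolve_left (by exact_mod_cast h), ← Nat.cast_sum,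
    hw_sum, Fintype.card_fin]
  push_cast
  exact mul_div_mul_right _ _ (by positivity)
end

section
/- For any integer k ≥ 2 and any n ≥ 3, the clockwise tournament CW(n) can be realized as a weighted k-majority tournament in which every edge has weight exactly k. -/
open scoped Classical
open Finset

/-!
Three linear orders of the vertices of `CW(n)` realize it as a `2`-majority tournament in which
every edge is won in exactly two of them: the reversed index order, the order putting the second
half of the indices above the first half (each half reversed), and an interleaving of the two
halves. A pair of mutually reverse orders gives exactly one vote to each ordered pair of distinct
vertices, so adding `k - 2` such pairs yields a `k`-majority realization in which every edge has
weight exactly `k`.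
-/

open Function

section Votes

variable {ι κ V : Type} [Fintype ι] [Fintype κ]

def votes (π : ι → LinearOrder V) (u v : V) : ℕ :=
  #{i | (π i).lt v u}

lemma weightFn_eq_votes [Fintype V] (k : ℕ) (π : Fin (2*k-1) → LinearOrder V) :
    weightFn k π = votes π := rfl

lemma votes_comp_equiv (π : ι → LinearOrder V) (e : κ ≃ ι) (u v : V) :
    votes (π ∘ e) u v = votes π u v := by
  simp only [votes, card_filter]
  exact e.sum_comp fun i => if (π i).lt v u then 1 else 0

lemma votes_sumElim (π : ι → LinearOrder V) (ρ : κ → LinearOrder V) (u v : V) :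
    votes (Sum.elim π ρ) u v = votes π u v + votes ρ u v := by
  simp only [votes, card_filter, Fintype.sum_sum_type]
  rfl

lemma votes_fst_const (m : ℕ) (ρ : κ → LinearOrder V) (u v : V) :
    votes (fun p : Fin m × κ => ρ p.2) u v = m * votes ρ u v := by
  rw [votes, votes, card_filter, card_filter, Fintype.sum_prod_type_right, mul_sum]
  exact sum_congr rfl fun i _ => by split_ifs <;> simp

lemma votes_self (π : ι → LinearOrder V) (u : V) : votes π u u = 0 := by
  simp only [votes, card_eq_zero, filter_eq_empty_iff]
  exact fun i _ => @lt_irrefl V (π i).toPreorder u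

lemma votes_add_votes (π : ι → LinearOrder V) {u v : V} (huv : u ≠ v) :
    votes π u v + votes π v u = Fintype.card ι := by
  have hswap : votes π v u = #{i | ¬ (π i).lt v u} := by
    refine congrArg card (filter_congr fun i _ => ?_)
    let := π i
    exact ⟨fun h => h.not_gt, fun h => (not_lt.mp h).lt_of_ne huv⟩
  rw [hswap, votes, card_filter_add_card_filter_not, card_univ]

end Votes

section Padding

variable {V : Type}

abbrev keyOrder (f : V → ℤ) (hf : Injective f) : LinearOrder V :=
  LinearOrder.lift' f hf

lemma votes_keyOrder {ι : Type} [Fintype ι] (f : ι → V → ℤ) (hf : ∀ i, Injective (f i))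
    (u v : V) : votes (fun i => keyOrder (f i) (hf i)) u v = #{i | f i v < f i u} := rfl

abbrev reversalPair (f : V → ℤ) (hf : Injective f) : Bool → LinearOrder V
  | true => keyOrder f hf
  | false => keyOrder (-f) (neg_injective.comp hf)

lemma votes_reversalPair (f : V → ℤ) (hf : Injective f) {u v : V} (huv : u ≠ v) :
    votes (reversalPair f hf) u v = 1 := by
  have hne : f u ≠ f v := hf.ne huv
  rw [votes, card_filter, Fintype.sum_bool]
  change (if f v < f u then 1 else 0) + (if -f v < -f u then 1 else 0) = 1
  split_ifs <;> omega

variable [Fintype V]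

noncomputable abbrev padded {ι : Type} (σ : ι → LinearOrder V) (m : ℕ) :
    ι ⊕ Fin m × Bool → LinearOrder V :=
  Sum.elim σ fun p => reversalPair (fun v => (Fintype.equivFin V v : ℤ))
    (Nat.cast_injective.comp (Fin.val_injective.comp (Fintype.equivFin V).injective)) p.2

lemma votes_padded {ι : Type} [Fintype ι] (σ : ι → LinearOrder V) (m : ℕ) {u v : V}
    (huv : u ≠ v) : votes (padded σ m) u v = votes σ u v + m := by
  rw [padded, votes_sumElim, votes_fst_const, votes_reversalPair _ _ huv, mul_one]

lemma exists_weightFn_eq_votes {ι : Type} [Fintype ι] {k : ℕ} (σ : ι → LinearOrder V)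
    (hι : Fintype.card ι = 2 * k - 1) :
    ∃ π : Fin (2*k-1) → LinearOrder V, weightFn k π = votes σ :=
  ⟨σ ∘ (Fintype.equivFinOfCardEq hι).symm, funext₂ fun _ _ => votes_comp_equiv _ _ _ _⟩

def IsExactRealization (k : ℕ) (π : Fin (2*k-1) → LinearOrder V) (R : V → V → Prop) :
    Prop :=
  (∀ u v, isEdge k π u v ↔ R u v) ∧ ∀ u v, R u v → weightFn k π u v = k

lemma isExactRealization_of_weightFn_eq {k : ℕ} (hk : 1 ≤ k)
    {π : Fin (2*k-1) → LinearOrder V} {R : V → V → Prop}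
    (hR : ∀ u v, R u v → weightFn k π u v = k)
    (htotal : ∀ u v, u ≠ v → R u v ∨ R v u) : IsExactRealization k π R := by
  refine ⟨fun u v => ⟨fun h => ?_, fun h => (hR u v h).ge⟩, hR⟩
  obtain rfl | huv := eq_or_ne u v
  · rw [isEdge, weightFn_eq_votes, votes_self] at h
    omega
  refine (htotal u v huv).resolve_right fun hvu => ?_
  have hsum := votes_add_votes π huv
  rw [← weightFn_eq_votes, hR v u hvu, Fintype.card_fin] at hsum
  rw [isEdge] at h
  omega

theorem exists_isExactRealization_of_votes_eq {ι : Type} [Fintype ι] {j : ℕ} (k : ℕ)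
    (hj : 1 ≤ j) (hjk : j ≤ k) (hι : Fintype.card ι = 2 * j - 1) (σ : ι → LinearOrder V)
    {R : V → V → Prop} (hR : ∀ u v, R u v → votes σ u v = j)
    (htotal : ∀ u v, u ≠ v → R u v ∨ R v u) : ∃ π, IsExactRealization k π R := by
  have hcard : Fintype.card (ι ⊕ Fin (k - j) × Bool) = 2 * k - 1 := by
    simp only [Fintype.card_sum, Fintype.card_prod, Fintype.card_fin, Fintype.card_bool, hι]
    omega
  obtain ⟨π, hπ⟩ := exists_weightFn_eq_votes (padded σ (k - j)) hcard
  refine ⟨π, isExactRealization_of_weightFn_eq (by omega) (fun u v h => ?_) htotal⟩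
  have huv : u ≠ v := by
    rintro rfl
    have := hR u u h
    rw [votes_self] at this
    omega
  rw [hπ, votes_padded σ _ huv, hR u v h]
  omega

end Padding

section Clockwise

variable {n : ℕ}

lemma cwEdge_iff (i j : Fin n) :
    cwEdge n i j ↔ (i.val < j.val ∧ j.val - i.val ≤ n / 2) ∨
      (j.val < i.val ∧ n / 2 < i.val - j.val) := by
  have hi := i.isLt
  have hj := j.isLt
  constructor
  · rintro ⟨m, hm, hmax, hjm⟩
    have hmn : m < n := by split_ifs at hmax <;> omega
    rcases Nat.lt_or_ge (i.val + m) n with h | h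
    · rw [Nat.mod_eq_of_lt h] at hjm
      split_ifs at hmax <;> omega
    · rw [Nat.mod_eq_sub_mod h, Nat.mod_eq_of_lt (by omega)] at hjm
      split_ifs at hmax <;> omega
  · rintro (⟨hij, hd⟩ | ⟨hji, hd⟩)
    · refine ⟨j.val - i.val, by omega, by split_ifs <;> omega, ?_⟩
      rw [Nat.add_sub_cancel' hij.le, Nat.mod_eq_of_lt hj]
    · refine ⟨n + j.val - i.val, by omega, by split_ifs <;> omega, ?_⟩
      rw [show i.val + (n + j.val - i.val) = j.val + n by omega, Nat.add_mod_right,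
        Nat.mod_eq_of_lt hj]

lemma cwEdge_total (i j : Fin n) (hij : i ≠ j) : cwEdge n i j ∨ cwEdge n j i := by
  rw [cwEdge_iff, cwEdge_iff]
  have := Fin.val_ne_of_ne hij
  omega

/- An edge `i → j` with `i < j` wins key `0` and exactly one of keys `1`, `2`; an edge with
`j < i` loses key `0` and wins both keys `1`, `2`. -/
def cwKey (n : ℕ) : Fin 3 → Fin n → ℤ
  | 0, i => -i
  | 1, i => if i.val < n - n / 2 then -i else n - i
  | 2, i => if i.val < n - n / 2 then 2 * i + 1 else 2 * (i - (n / 2 : ℕ))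

lemma cwKey_injective (s : Fin 3) : Injective (cwKey n s) := by
  intro a b h
  have ha := a.isLt
  have hb := b.isLt
  fin_cases s <;> simp only [cwKey] at h <;> exact Fin.ext (by (try split_ifs at h) <;> omega)

abbrev cwOrders (n : ℕ) : Fin 3 → LinearOrder (Fin n) :=
  fun s => keyOrder (cwKey n s) (cwKey_injective s)

lemma votes_cwOrders {i j : Fin n} (hij : cwEdge n i j) : votes (cwOrders n) i j = 2 := by
  rw [cwEdge_iff] at hij
  rw [votes_keyOrder, card_filter, Fin.sum_univ_three]
  split_ifs <;> simp only [cwKey] at * <;> split_ifs at * <;> omega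

end Clockwise

theorem stmt8_general (k n : ℕ) (hk : 2 ≤ k) :
    ∃ π : Fin (2*k-1) → LinearOrder (Fin n),
      (∀ i j : Fin n, isEdge k π i j ↔ cwEdge n i j) ∧
      (∀ i j : Fin n, cwEdge n i j → weightFn k π i j = k) :=
  exists_isExactRealization_of_votes_eq k one_le_two hk rfl (cwOrders n)
    (fun _ _ => votes_cwOrders) cwEdge_total

theorem stmt8 (k n : ℕ) (hk : 2 ≤ k) (hn : 3 ≤ n) :
    ∃ π : Fin (2*k-1) → LinearOrder (Fin n),
      (∀ i j : Fin n, isEdge k π i j ↔ cwEdge n i j) ∧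
      (∀ i j : Fin n, cwEdge n i j → weightFn k π i j = k) :=
  stmt8_general k n hk
end

section
/- Let T = CW(n) be a clockwise tournament and let S be a proper subset of V(T). If S = V(T) - {v} for some vertex v, then v is dominated by at most (|S|+1)/2 vertices of S. Otherwise (|V(T)-S| ≥ 2), there exists a vertex v ∉ S such that v is dominated by at most |S|/2 vertices of S. -/
open scoped Classical
open Finset

/-!
Counting edges inside a set `C` of vertices, the in-degrees within `C` of any tournament sum to
`#C (#C - 1) / 2`, so some vertex of `C` has in-degree at least the average. In `CW(n)` a vertex
`v` has at most `cwInDeg n v ≤ n / 2` in-neighbours (one fewer on the first half when `n` is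
even), and those in `S` are the ones outside `C = V \ S`, so
`2 #{u ∈ S | u → v} ≤ 2 cwInDeg n v - 2 #{u ∈ C | u → v}`. The average argument gives the
claim unless `n` is even and `C` lies in the second half; there the last vertex of `C` is
dominated by all others of `C`.
-/

section Tournament

variable {α : Type*} [DecidableEq α] {r : α → α → Prop} [DecidableRel r] {C : Finset α}

theorem card_mul_pred_le_two_mul_sum_card_filter
    (htot : ∀ u ∈ C, ∀ v ∈ C, u ≠ v → r u v ∨ r v u) :
    #C * (#C - 1) ≤ 2 * ∑ v ∈ C, #{u ∈ C | r u v} := by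
  have hdeg : ∀ v ∈ C, #C - 1 ≤ #{u ∈ C | r u v} + #{w ∈ C | r v w} := by
    intro v hv
    have hcover : C.erase v ⊆ {u ∈ C | r u v} ∪ {w ∈ C | r v w} := by
      intro u hu
      obtain ⟨huv, huC⟩ := mem_erase.1 hu
      rcases htot u huC v hv huv with h | h
      · exact mem_union_left _ (mem_filter.2 ⟨huC, h⟩)
      · exact mem_union_right _ (mem_filter.2 ⟨huC, h⟩)
    calc #C - 1 = #(C.erase v) := (card_erase_of_mem hv).symm
      _ ≤ _ := (card_le_card hcover).trans (card_union_le _ _)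
  have hin_out : ∑ v ∈ C, #{u ∈ C | r u v} = ∑ v ∈ C, #{w ∈ C | r v w} := by
    simp only [card_filter]
    exact sum_comm
  calc #C * (#C - 1) = ∑ _v ∈ C, (#C - 1) := by rw [sum_const, smul_eq_mul]
    _ ≤ ∑ v ∈ C, (#{u ∈ C | r u v} + #{w ∈ C | r v w}) := sum_le_sum hdeg
    _ = 2 * ∑ v ∈ C, #{u ∈ C | r u v} := by rw [sum_add_distrib, ← hin_out, two_mul]

theorem exists_card_le_two_mul_card_filter_add
    (htot : ∀ u ∈ C, ∀ v ∈ C, u ≠ v → r u v ∨ r v u) (slack : α → ℕ)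
    (hslack : 0 < ∑ v ∈ C, slack v) :
    ∃ v ∈ C, #C ≤ 2 * #{u ∈ C | r u v} + slack v := by
  have hsum := card_mul_pred_le_two_mul_sum_card_filter htot
  have hlt : ∑ _v ∈ C, #C < ∑ v ∈ C, (2 * #{u ∈ C | r u v} + slack v + 1) := by
    rw [sum_const, smul_eq_mul, sum_add_distrib, sum_add_distrib, ← mul_sum, sum_const,
      smul_eq_mul, mul_one]
    have : #C * #C = #C * (#C - 1) + #C := by
      cases h : #C <;> simp [Nat.mul_succ]
    omega
  obtain ⟨v, hv, hlt⟩ := exists_lt_of_sum_lt hlt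
  exact ⟨v, hv, Nat.lt_succ_iff.1 hlt⟩

end Tournament

section Clockwise

def cwDist (n : ℕ) (u v : Fin n) : ℕ :=
  if u.val ≤ v.val then v.val - u.val else v.val + n - u.val

def cwOutDeg (n : ℕ) (u : Fin n) : ℕ :=
  if n % 2 = 1 then (n - 1) / 2 else if u.val < n / 2 then n / 2 else n / 2 - 1

def cwInDeg (n : ℕ) (v : Fin n) : ℕ :=
  if n % 2 = 1 then (n - 1) / 2 else if v.val < n / 2 then n / 2 - 1 else n / 2

variable {n : ℕ}

theorem cwEdge_iff_cwDist (u v : Fin n) :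
    cwEdge n u v ↔ 1 ≤ cwDist n u v ∧ cwDist n u v ≤ cwOutDeg n u := by
  have hu := u.isLt
  have hv := v.isLt
  constructor
  · rintro ⟨m, hm1, hm2, hj⟩
    have hmn : m < n := by split_ifs at hm2 <;> omega
    have hdist : cwDist n u v = m := by
      rcases lt_or_ge (u.val + m) n with h | h
      · rw [Nat.mod_eq_of_lt h] at hj
        unfold cwDist
        split_ifs <;> omega
      · rw [Nat.mod_eq_sub_mod h, Nat.mod_eq_of_lt (by omega)] at hj
        unfold cwDist
        split_ifs <;> omega
    rw [hdist, cwOutDeg]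
    exact ⟨hm1, by split_ifs at hm2 ⊢ <;> omega⟩
  · rintro ⟨h1, h2⟩
    refine ⟨cwDist n u v, h1, by unfold cwOutDeg at h2; split_ifs at h2 ⊢ <;> omega, ?_⟩
    unfold cwDist at h1 ⊢
    split_ifs at h1 ⊢ with h
    · rw [Nat.add_sub_cancel' h, Nat.mod_eq_of_lt hv]
    · rw [show u.val + (v.val + n - u.val) = v.val + n by omega, Nat.add_mod_right,
        Nat.mod_eq_of_lt hv]

theorem cwEdge_or_cwEdge_of_ne {u v : Fin n} (h : u ≠ v) : cwEdge n u v ∨ cwEdge n v u := by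
  rw [cwEdge_iff_cwDist, cwEdge_iff_cwDist]
  have := Fin.val_ne_of_ne h
  have hu := u.isLt
  have hv := v.isLt
  unfold cwDist cwOutDeg
  split_ifs <;> omega

theorem cwEdge_of_half_le_of_lt {u v : Fin n} (hu : n / 2 ≤ u.val) (huv : u < v) :
    cwEdge n u v := by
  have hv := v.isLt
  have huv' : u.val < v.val := huv
  rw [cwEdge_iff_cwDist, cwDist, if_pos huv'.le, cwOutDeg]
  split_ifs <;> omega

theorem card_filter_cwEdge_le (v : Fin n) : #{u | cwEdge n u v} ≤ cwInDeg n v := by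
  have hv := v.isLt
  have hmaps : Set.MapsTo (cwDist n · v) (univ.filter (cwEdge n · v) : Finset (Fin n))
      (Icc 1 (cwInDeg n v) : Finset ℕ) := by
    intro u hu
    have hu' := u.isLt
    have h := (cwEdge_iff_cwDist u v).1 (mem_filter.1 hu).2
    simp only [coe_Icc, Set.mem_Icc]
    unfold cwDist cwOutDeg cwInDeg at *
    split_ifs at * <;> omega
  have hinj : Set.InjOn (cwDist n · v) (univ.filter (cwEdge n · v) : Finset (Fin n)) := by
    intro a _ b _ hab
    have ha := a.isLt
    have hb := b.isLt
    simp only [cwDist] at hab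
    apply Fin.ext
    split_ifs at hab <;> omega
  simpa using card_le_card_of_injOn _ hmaps hinj

theorem two_mul_cwInDeg_le (v : Fin n) : 2 * cwInDeg n v ≤ n := by
  have := v.pos
  unfold cwInDeg
  split_ifs <;> omega

theorem exists_card_le_two_mul_card_filter_cwEdge_add {C : Finset (Fin n)} (hC : 2 ≤ #C) :
    ∃ v ∈ C, #C ≤ 2 * #{u ∈ C | cwEdge n u v} + (n - 2 * cwInDeg n v) := by
  by_cases hslack : ∃ v ∈ C, 0 < n - 2 * cwInDeg n v
  · exact exists_card_le_two_mul_card_filter_add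
      (fun u _ v _ huv => cwEdge_or_cwEdge_of_ne huv) _
      (sum_pos' (fun _ _ => Nat.zero_le _) hslack)
  -- Otherwise `n` is even and `C` lies in the second half, where `u < v` gives `u → v`.
  push Not at hslack
  have hhalf : ∀ v ∈ C, n / 2 ≤ v.val := by
    intro v hv
    have h := hslack v hv
    have := v.pos
    unfold cwInDeg at h
    split_ifs at h <;> omega
  have hne : C.Nonempty := card_pos.1 (by omega)
  set w := C.max' hne
  have hwC : w ∈ C := C.max'_mem hne
  have hdominated : C.erase w ⊆ {u ∈ C | cwEdge n u w} := by
    intro u hu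
    obtain ⟨huw, huC⟩ := mem_erase.1 hu
    exact mem_filter.2 ⟨huC, cwEdge_of_half_le_of_lt (hhalf u huC)
      (lt_of_le_of_ne (C.le_max' u huC) huw)⟩
  have := card_le_card hdominated
  rw [card_erase_of_mem hwC] at this
  exact ⟨w, hwC, by omega⟩

end Clockwise

theorem stmt10_general (n : ℕ) (S : Finset (Fin n)) :
    (∀ v : Fin n, S = Finset.univ \ {v} →
        2 * (S.filter (fun u => cwEdge n u v)).card ≤ S.card + 1) ∧
    (2 ≤ (Finset.univ \ S).card →
        ∃ v : Fin n, v ∉ S ∧ 2 * (S.filter (fun u => cwEdge n u v)).card ≤ S.card) := by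
  constructor
  · rintro v rfl
    have hsub := card_le_card (filter_subset_filter (cwEdge n · v) (subset_univ (univ \ {v})))
    have hcard : #(univ \ {v}) + 1 = n := by
      rw [card_sdiff_of_subset (subset_univ _), card_singleton, card_univ, Fintype.card_fin]
      have := v.pos
      omega
    have := card_filter_cwEdge_le v
    have := two_mul_cwInDeg_le v
    omega
  · intro hC
    obtain ⟨v, hvC, hv⟩ := exists_card_le_two_mul_card_filter_cwEdge_add hC
    refine ⟨v, (mem_sdiff.1 hvC).2, ?_⟩
    have hsplit : #{u ∈ S | cwEdge n u v} + #{u ∈ univ \ S | cwEdge n u v}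
        = #{u | cwEdge n u v} := by
      rw [← card_union_of_disjoint (disjoint_filter_filter disjoint_sdiff), ← filter_union,
        union_sdiff_of_subset (subset_univ S)]
    have hcard : #(univ \ S) + #S = n := by
      rw [card_sdiff_add_card_eq_card (subset_univ S), card_univ, Fintype.card_fin]
    have := card_filter_cwEdge_le v
    have := two_mul_cwInDeg_le v
    omega

theorem stmt10 (n : ℕ) (S : Finset (Fin n)) (hS : S ≠ Finset.univ) :
    (∀ v : Fin n, S = Finset.univ \ {v} →
        2 * (S.filter (fun u => cwEdge n u v)).card ≤ S.card + 1) ∧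
    (2 ≤ (Finset.univ \ S).card →
        ∃ v : Fin n, v ∉ S ∧ 2 * (S.filter (fun u => cwEdge n u v)).card ≤ S.card) :=
  stmt10_general n S
end

section
/- Let T be the weighted tournament on three vertices a, b, c with edges a→b of weight 2q, b→c of weight k, and c→a of weight k, where k ≥ 2, 2q is an integer, and k/2 ≤ q ≤ k-1. Then γ_w(T) = q. -/
open scoped Classical
open Finset

/-! Every vertex of the 3-cycle has exactly one in-neighbour, so a set misses a vertex `v` and
still dominates only if it contains both other vertices. Hence the dominating sets are `univ`
(weight `0`) and the three pairs `univ.erase v`, whose weight is half the weight of the single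
edge into `v`: `q`, `k/2` and `k/2`. -/

section General

variable {V : Type} [Fintype V] {k : ℕ} {π : Fin (2*k-1) → LinearOrder V}

theorem weightFn_add_weightFn_swap {u v : V} (h : u ≠ v) :
    weightFn k π u v + weightFn k π v u = 2*k-1 := by
  have hswap : weightFn k π v u = (univ.filter fun i => ¬ (π i).lt v u).card := by
    unfold weightFn
    congr 1
    ext i
    let _ := π i
    simp only [mem_filter, mem_univ, true_and, not_lt]
    exact ⟨le_of_lt, fun hle => lt_of_le_of_ne hle h⟩
  rw [hswap, weightFn, card_filter_add_card_filter_not, card_univ, Fintype.card_fin]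

theorem not_isEdge_self (hk : 0 < k) (v : V) : ¬ isEdge k π v v := by
  simp [isEdge, weightFn, hk.ne']

theorem not_isEdge_swap (hk : 0 < k) {u v : V} (huv : isEdge k π u v) : ¬ isEdge k π v u := by
  rcases eq_or_ne u v with rfl | h
  · exact not_isEdge_self hk u
  · have := weightFn_add_weightFn_swap (π := π) h
    unfold isEdge at huv ⊢
    omega

theorem Wgap_univ : Wgap k π univ = 0 := dif_pos rfl

theorem Wgap_erase [DecidableEq V] (v : V) :
    Wgap k π (univ.erase v) = avgInweight k π (univ.erase v) v := by
  have hne : univ.erase v ≠ univ := fun h => notMem_erase v univ (h.symm ▸ mem_univ v)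
  rw [Wgap, dif_neg hne]
  refine le_antisymm (inf'_le _ (by simp)) (le_inf' _ _ fun w hw => ?_)
  obtain rfl : w = v := by simpa using hw
  rfl

theorem avgInweight_eq_of_unique_inNeighbor {D : Finset V} {u v : V} (hu : u ∈ D)
    (huv : isEdge k π u v) (huniq : ∀ w ∈ D, isEdge k π w v → w = u) :
    avgInweight k π D v = weightFn k π u v / D.card := by
  have hin : D.filter (fun w => isEdge k π w v) = {u} := by
    ext w
    simp only [mem_filter, mem_singleton]
    exact ⟨fun hw => huniq w hw.1 hw.2, fun h => h ▸ ⟨hu, huv⟩⟩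
  rw [avgInweight, hin, sum_singleton]

theorem le_gammaW {D : Finset V} (hD : IsDomSet k π D) : Wgap k π D ≤ gammaW k π :=
  le_sup' (fun D => Wgap k π D) (mem_filter.mpr ⟨mem_univ D, hD⟩)

theorem gammaW_le {c : ℚ} (h : ∀ D, IsDomSet k π D → Wgap k π D ≤ c) : gammaW k π ≤ c :=
  sup'_le _ _ fun D hD => h D (mem_filter.mp hD).2

end General

section Cycle

variable {k : ℕ} {π : Fin (2*k-1) → LinearOrder (Fin 3)} (hk : 0 < k)
  (e01 : isEdge k π 0 1) (e12 : isEdge k π 1 2) (e20 : isEdge k π 2 0)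
include hk e01 e12 e20

theorem isEdge_iff_eq_sub_one {u v : Fin 3} : isEdge k π u v ↔ u = v - 1 := by
  have n10 := not_isEdge_swap hk e01
  have n21 := not_isEdge_swap hk e12
  have n02 := not_isEdge_swap hk e20
  have nself := not_isEdge_self (π := π) hk
  fin_cases u <;> fin_cases v
  all_goals first
    | exact iff_of_true ‹_› (by decide)
    | exact iff_of_false ‹_› (by decide)
    | exact iff_of_false (nself _) (by decide)

theorem isDomSet_iff {D : Finset (Fin 3)} :
    IsDomSet k π D ↔ D = univ ∨ ∃ v, D = univ.erase v := by
  have hedge := fun u v => isEdge_iff_eq_sub_one (u := u) (v := v) hk e01 e12 e20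
  constructor
  · intro hD
    by_cases hv : ∃ v, v ∉ D
    · obtain ⟨v, hv⟩ := hv
      refine Or.inr ⟨v, ext fun w => ?_⟩
      rcases eq_or_ne w v with rfl | hwv
      · simp [hv]
      · simp only [mem_erase, hwv, ne_eq, not_false_eq_true, mem_univ, and_true, iff_true]
        by_contra hw
        obtain ⟨u, hu, huv⟩ := hD v hv
        obtain ⟨u', hu', hu'w⟩ := hD w hw
        rw [hedge] at huv hu'w
        subst huv hu'w
        -- one of `v`, `w` is the in-neighbour of the other, yet neither lies in `D`
        have : w = v - 1 ∨ v = w - 1 := by clear hu hu' hv hw; revert w v; decide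
        rcases this with rfl | rfl <;> contradiction
    · push Not at hv
      exact Or.inl (eq_univ_of_forall hv)
  · rintro (rfl | ⟨v, rfl⟩) w hw
    · exact absurd (mem_univ w) hw
    · obtain rfl : w = v := by simpa using hw
      exact ⟨w - 1, by simp, (hedge _ _).2 rfl⟩

theorem Wgap_erase_eq_half_weightFn (v : Fin 3) :
    Wgap k π (univ.erase v) = weightFn k π (v - 1) v / 2 := by
  have hedge := fun u => isEdge_iff_eq_sub_one (u := u) (v := v) hk e01 e12 e20
  rw [Wgap_erase, avgInweight_eq_of_unique_inNeighbor (u := v - 1) (by simp) ((hedge _).2 rfl)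
    fun w _ hw => (hedge w).1 hw, card_erase_of_mem (mem_univ v)]
  norm_num

end Cycle

theorem stmt15_general (k : ℕ) (hk : 2 ≤ k) (q : ℚ)
    (hql : (k:ℚ)/2 ≤ q)
    (π : Fin (2*k-1) → LinearOrder (Fin 3))
    (hab : isEdge k π 0 1 ∧ (weightFn k π 0 1 : ℚ) = 2*q)
    (hbc : isEdge k π 1 2 ∧ weightFn k π 1 2 = k)
    (hca : isEdge k π 2 0 ∧ weightFn k π 2 0 = k) :
    gammaW k π = q := by
  obtain ⟨e01, hw01⟩ := hab
  obtain ⟨e12, hw12⟩ := hbc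
  obtain ⟨e20, hw20⟩ := hca
  have hk0 : 0 < k := by omega
  have hWgap := Wgap_erase_eq_half_weightFn hk0 e01 e12 e20
  refine le_antisymm (gammaW_le fun D hD => ?_) ?_
  · rcases (isDomSet_iff hk0 e01 e12 e20).1 hD with rfl | ⟨v, rfl⟩
    · rw [Wgap_univ]
      linarith [(by positivity : (0:ℚ) ≤ k / 2)]
    · rw [hWgap]
      fin_cases v
      · simpa [show (0 : Fin 3) - 1 = 2 from rfl, hw20] using hql
      · simp [hw01]
      · simpa [show (2 : Fin 3) - 1 = 1 from rfl, hw12] using hql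
  · have h1 := le_gammaW ((isDomSet_iff hk0 e01 e12 e20).2 (Or.inr ⟨1, rfl⟩))
    rwa [hWgap, show (1 : Fin 3) - 1 = 0 from rfl, hw01, mul_div_cancel_left₀ q two_ne_zero] at h1

theorem stmt15 (k : ℕ) (hk : 2 ≤ k) (q : ℚ) (hq2 : ∃ m : ℤ, 2*q = m)
    (hql : (k:ℚ)/2 ≤ q) (hqu : q ≤ (k:ℚ)-1)
    (π : Fin (2*k-1) → LinearOrder (Fin 3))
    (hab : isEdge k π 0 1 ∧ (weightFn k π 0 1 : ℚ) = 2*q)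
    (hbc : isEdge k π 1 2 ∧ weightFn k π 1 2 = k)
    (hca : isEdge k π 2 0 ∧ weightFn k π 2 0 = k) :
    gammaW k π = q :=
  stmt15_general k hk q hql π hab hbc hca
end
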